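/- Let p ≥ 1 and s ≥ 1 be integers, let r = s + 1 or r = s + 2, and let G be the graph 𝒢(p,r,s) on n = p + r + s + 2 vertices. Then q₁(G) > d₁(G) + 1 + p/n and q₂(G) > d₂(G) − p/n, where q₁(G) ≥ q₂(G) are the two largest eigenvalues (with multiplicity) of the signless Laplacian Q(G) and d₁(G) ≥ d₂(G) are the two largest vertex degrees of G (here d₁(G) = p + r + 1 and d₂(G) = p + s + 1). -/

import Mathlib

/-!
Both bounds come from the Rayleigh principle for `Q = Q(𝒢(p,r,s))`: `q₁ ≥ xᵀQx / xᵀx` for every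
`x ≠ 0`, and `q₂ > c` as soon as `Q - c` is positive definite on some plane. The cells `{u}`, `{v}`,
`P`, `R`, `S` form an equitable partition, so on cell-constant vectors the form
`xᵀQx = ∑_{ab ∈ E} (x_a + x_b)²` collapses to a form in five variables. We test `q₁` with
`x = (2(p+r), p+r, 2, 2, 0)` and `q₂` with the plane spanned by `x` and `y = (0, p+s, 1, 0, 1)`
(values on `u, v, P, R, S`). In both cases `r = s + 1` and `r = s + 2`, after writing `p = P + 1`,
`s = S + 1` and clearing denominators, each required inequality says that a polynomial in `P, S`
with positive coefficients is positive. Finally `d₁ = deg u = p + r + 1` and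
`d₂ = deg v = p + s + 1`.
-/

open Matrix

/-- The signless Laplacian matrix `Q(G) = D + A` of a simple graph, over `ℝ`. -/
def sLapMatrix {m : ℕ} (G : SimpleGraph (Fin m)) [DecidableRel G.Adj] :
    Matrix (Fin m) (Fin m) ℝ :=
  G.degMatrix ℝ + G.adjMatrix ℝ

/-- `q` lists the eigenvalues of `A` (with multiplicity) in non-increasing order. -/
def IsEigSeq {m : ℕ} (A : Matrix (Fin m) (Fin m) ℝ) (q : Fin m → ℝ) : Prop :=
  Antitone q ∧ ∃ (hA : A.IsHermitian) (σ : Equiv.Perm (Fin m)),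
    ∀ i, q i = hA.eigenvalues (σ i)

/-- `d` lists the degrees of `G` (with multiplicity) in non-increasing order. -/
def IsDegSeq {m : ℕ} (G : SimpleGraph (Fin m)) [DecidableRel G.Adj] (d : Fin m → ℕ) : Prop :=
  Antitone d ∧ ∃ σ : Equiv.Perm (Fin m), ∀ i, d i = G.degree (σ i)

/-- The graph `𝒢(p,r,s)` on `p + r + s + 2` vertices: the graph `ℋ(p,r,s)` plus the
edge `{u, v} = {0, 1}`. -/
def GGraph (p r s : ℕ) : SimpleGraph (Fin (p + r + s + 2)) where
  Adj a b :=
    ((a.val = 0 ∧ b.val = 1) ∨ (b.val = 0 ∧ a.val = 1)) ∨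
    (((a.val = 0 ∧ 2 ≤ b.val ∧ b.val < p + r + 2) ∨
      (a.val = 1 ∧ 2 ≤ b.val ∧ (b.val < p + 2 ∨ p + r + 2 ≤ b.val))) ∨
     ((b.val = 0 ∧ 2 ≤ a.val ∧ a.val < p + r + 2) ∨
      (b.val = 1 ∧ 2 ≤ a.val ∧ (a.val < p + 2 ∨ p + r + 2 ≤ a.val))))
  symm := ⟨by intro a b h; tauto⟩
  loopless := ⟨by
    intro a h
    rcases h with (⟨h1, h2⟩ | ⟨h1, h2⟩) |
      ((⟨h1, h2, _⟩ | ⟨h1, h2, _⟩) | (⟨h1, h2, _⟩ | ⟨h1, h2, _⟩)) <;> omega⟩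

instance GGraph.adjDecidable (p r s : ℕ) : DecidableRel (GGraph p r s).Adj := fun a b =>
  inferInstanceAs (Decidable
    (((a.val = 0 ∧ b.val = 1) ∨ (b.val = 0 ∧ a.val = 1)) ∨
     (((a.val = 0 ∧ 2 ≤ b.val ∧ b.val < p + r + 2) ∨
       (a.val = 1 ∧ 2 ≤ b.val ∧ (b.val < p + 2 ∨ p + r + 2 ≤ b.val))) ∨
      ((b.val = 0 ∧ 2 ≤ a.val ∧ a.val < p + r + 2) ∨
       (b.val = 1 ∧ 2 ≤ a.val ∧ (a.val < p + 2 ∨ p + r + 2 ≤ a.val))))))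

open Finset

lemma quadratic_pos_of_sq_lt_mul {a b c α β : ℝ} (ha : 0 < a) (hdisc : b ^ 2 < a * c)
    (hαβ : α ≠ 0 ∨ β ≠ 0) : 0 < a * α ^ 2 + 2 * b * α * β + c * β ^ 2 := by
  rcases eq_or_ne β 0 with rfl | hβ
  · have hα : α ≠ 0 := hαβ.resolve_right (not_not.mpr rfl)
    simp only [mul_zero, zero_pow two_ne_zero, add_zero]
    positivity
  · have hsq : a * (a * α ^ 2 + 2 * b * α * β + c * β ^ 2) =
        (a * α + b * β) ^ 2 + (a * c - b ^ 2) * β ^ 2 := by ring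
    refine pos_of_mul_pos_right (hsq ▸ ?_) ha.le
    have : 0 < (a * c - b ^ 2) * β ^ 2 := mul_pos (sub_pos.mpr hdisc) (by positivity)
    positivity

namespace Matrix.IsHermitian

variable {n : Type*} [Fintype n] {A : Matrix n n ℝ}

lemma dotProduct_mulVec_comm (hA : A.IsHermitian) (x y : n → ℝ) :
    x ⬝ᵥ A *ᵥ y = y ⬝ᵥ A *ᵥ x := by
  have hAt : Aᵀ = A := by simpa [conjTranspose_eq_transpose_of_trivial] using hA.eq
  rw [dotProduct_mulVec, ← hAt, vecMul_transpose, hAt, dotProduct_comm]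

variable [DecidableEq n]

lemma dotProduct_eq_sum_repr_mul (hA : A.IsHermitian) (x y : n → ℝ) :
    x ⬝ᵥ y = ∑ j, hA.eigenvectorBasis.repr (WithLp.toLp 2 x) j *
      hA.eigenvectorBasis.repr (WithLp.toLp 2 y) j := by
  have h := hA.eigenvectorBasis.repr.inner_map_map (WithLp.toLp 2 x) (WithLp.toLp 2 y)
  simp only [EuclideanSpace.inner_eq_star_dotProduct, star_trivial] at h
  simpa [dotProduct, mul_comm] using h.symm

lemma repr_mulVec (hA : A.IsHermitian) (x : n → ℝ) (j : n) :
    hA.eigenvectorBasis.repr (WithLp.toLp 2 (A *ᵥ x)) j =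
      hA.eigenvalues j * hA.eigenvectorBasis.repr (WithLp.toLp 2 x) j := by
  simp only [OrthonormalBasis.repr_apply_apply, EuclideanSpace.inner_eq_star_dotProduct,
    star_trivial]
  rw [dotProduct_comm, hA.dotProduct_mulVec_comm, hA.mulVec_eigenvectorBasis, dotProduct_smul,
    smul_eq_mul, dotProduct_comm]

lemma dotProduct_mulVec_le (hA : A.IsHermitian) {μ : ℝ} (x : n → ℝ)
    (hx : ∀ j, μ < hA.eigenvalues j → hA.eigenvectorBasis.repr (WithLp.toLp 2 x) j = 0) :
    x ⬝ᵥ A *ᵥ x ≤ μ * (x ⬝ᵥ x) := by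
  rw [hA.dotProduct_eq_sum_repr_mul x (A *ᵥ x), hA.dotProduct_eq_sum_repr_mul, mul_sum]
  refine sum_le_sum fun j _ => ?_
  rw [repr_mulVec]
  rcases le_or_gt (hA.eigenvalues j) μ with hle | hlt
  · nlinarith [mul_self_nonneg (hA.eigenvectorBasis.repr (WithLp.toLp 2 x) j)]
  · simp [hx j hlt]

end Matrix.IsHermitian

namespace IsEigSeq

variable {m : ℕ} {A : Matrix (Fin m) (Fin m) ℝ} {q : Fin m → ℝ}

lemma dotProduct_mulVec_le_apply_zero (hq : IsEigSeq A q) (hm : 0 < m) (x : Fin m → ℝ) :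
    x ⬝ᵥ A *ᵥ x ≤ q ⟨0, hm⟩ * (x ⬝ᵥ x) := by
  obtain ⟨hanti, hA, σ, hσ⟩ := hq
  refine hA.dotProduct_mulVec_le x fun j hj => absurd hj (not_lt.mpr ?_)
  calc hA.eigenvalues j = q (σ.symm j) := by rw [hσ, σ.apply_symm_apply]
    _ ≤ q ⟨0, hm⟩ := hanti (Fin.mk_le_of_le_val (Nat.zero_le _))

lemma exists_dotProduct_mulVec_le_apply_one (hq : IsEigSeq A q) (hm : 1 < m)
    (x y : Fin m → ℝ) :
    ∃ α β : ℝ, (α ≠ 0 ∨ β ≠ 0) ∧ (α • x + β • y) ⬝ᵥ A *ᵥ (α • x + β • y) ≤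
      q ⟨1, hm⟩ * ((α • x + β • y) ⬝ᵥ (α • x + β • y)) := by
  obtain ⟨hanti, hA, σ, hσ⟩ := hq
  set top : Fin m := σ ⟨0, Nat.zero_lt_of_lt hm⟩
  set c : (Fin m → ℝ) → ℝ := fun z => hA.eigenvectorBasis.repr (WithLp.toLp 2 z) top
  -- `αx + βy` is orthogonal to the eigenvector of the top eigenvalue.
  obtain ⟨α, β, hαβ, hc⟩ : ∃ α β : ℝ, (α ≠ 0 ∨ β ≠ 0) ∧ α * c x + β * c y = 0 := by
    by_cases hcx : c x = 0
    · exact ⟨1, 0, Or.inl one_ne_zero, by simp [hcx]⟩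
    · exact ⟨c y, -c x, Or.inr (neg_ne_zero.mpr hcx), by ring⟩
  refine ⟨α, β, hαβ, hA.dotProduct_mulVec_le _ fun j hj => ?_⟩
  have hj : j = top := by
    by_contra hne
    refine hj.not_ge ?_
    calc hA.eigenvalues j = q (σ.symm j) := by rw [hσ, σ.apply_symm_apply]
      _ ≤ q ⟨1, hm⟩ := hanti (Fin.mk_le_of_le_val (Nat.one_le_iff_ne_zero.mpr fun h0 =>
          hne (by rw [← σ.apply_symm_apply j]; exact congrArg σ (Fin.ext h0))))
  subst hj
  simpa [c] using hc

lemma lt_apply_zero (hq : IsEigSeq A q) (hm : 0 < m) {c : ℝ} (x : Fin m → ℝ)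
    (hx : c * (x ⬝ᵥ x) < x ⬝ᵥ A *ᵥ x) : c < q ⟨0, hm⟩ :=
  lt_of_mul_lt_mul_right (hx.trans_le (hq.dotProduct_mulVec_le_apply_zero hm x))
    (sum_nonneg fun i _ => mul_self_nonneg (x i))

lemma lt_apply_one (hq : IsEigSeq A q) (hm : 1 < m) {c : ℝ} (x y : Fin m → ℝ)
    (hx : c * (x ⬝ᵥ x) < x ⬝ᵥ A *ᵥ x)
    (hxy : (x ⬝ᵥ A *ᵥ y - c * (x ⬝ᵥ y)) ^ 2 <
      (x ⬝ᵥ A *ᵥ x - c * (x ⬝ᵥ x)) * (y ⬝ᵥ A *ᵥ y - c * (y ⬝ᵥ y))) :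
    c < q ⟨1, hm⟩ := by
  obtain ⟨α, β, hαβ, hle⟩ := hq.exists_dotProduct_mulVec_le_apply_one hm x y
  have hsymm : y ⬝ᵥ A *ᵥ x = x ⬝ᵥ A *ᵥ y := hq.2.1.dotProduct_mulVec_comm y x
  have hexp :
      (α • x + β • y) ⬝ᵥ A *ᵥ (α • x + β • y) - c * ((α • x + β • y) ⬝ᵥ (α • x + β • y)) =
      (x ⬝ᵥ A *ᵥ x - c * (x ⬝ᵥ x)) * α ^ 2 + 2 * (x ⬝ᵥ A *ᵥ y - c * (x ⬝ᵥ y)) * α * β +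
        (y ⬝ᵥ A *ᵥ y - c * (y ⬝ᵥ y)) * β ^ 2 := by
    simp only [mulVec_add, mulVec_smul, add_dotProduct, dotProduct_add, smul_dotProduct,
      dotProduct_smul, smul_eq_mul, hsymm, dotProduct_comm y x]
    ring
  have hpos := quadratic_pos_of_sq_lt_mul (sub_pos.mpr hx) hxy hαβ
  exact lt_of_mul_lt_mul_right ((sub_pos.mp (hexp ▸ hpos)).trans_le hle)
    (sum_nonneg fun i _ => mul_self_nonneg _)

end IsEigSeq

lemma IsDegSeq.apply_zero_apply_one {m : ℕ} {G : SimpleGraph (Fin m)} [DecidableRel G.Adj]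
    {d : Fin m → ℕ} (hd : IsDegSeq G d) (hm : 1 < m) {v w : Fin m} (hvw : v ≠ w)
    (hv : ∀ u, G.degree u ≤ G.degree v) (hw : ∀ u ≠ v, G.degree u ≤ G.degree w) :
    d ⟨0, by omega⟩ = G.degree v ∧ d ⟨1, hm⟩ = G.degree w := by
  obtain ⟨hanti, σ, hσ⟩ := hd
  have hzero_le (j : Fin m) : (⟨0, by omega⟩ : Fin m) ≤ j := Fin.mk_le_of_le_val (Nat.zero_le _)
  have hone_le (j : Fin m) (hj : j ≠ ⟨0, by omega⟩) : (⟨1, hm⟩ : Fin m) ≤ j :=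
    Fin.mk_le_of_le_val (Nat.one_le_iff_ne_zero.mpr fun h => hj (Fin.ext h))
  have hdv : d (σ.symm v) = G.degree v := by rw [hσ, σ.apply_symm_apply]
  have hdw : d (σ.symm w) = G.degree w := by rw [hσ, σ.apply_symm_apply]
  refine ⟨le_antisymm (hσ _ ▸ hv _) (hdv ▸ hanti (hzero_le _)), le_antisymm ?_ ?_⟩
  · by_cases h : σ ⟨1, hm⟩ = v
    · have h0 : σ ⟨0, by omega⟩ ≠ v := fun h0 => by
        simpa using σ.injective (h0.trans h.symm)
      exact (hanti (hzero_le _)).trans (hσ _ ▸ hw _ h0)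
    · exact hσ _ ▸ hw _ h
  · by_cases h : σ.symm w = ⟨0, by omega⟩
    · have hv0 : σ.symm v ≠ ⟨0, by omega⟩ := fun hv0 =>
        hvw (σ.symm.injective (hv0.trans h.symm))
      exact (hdv ▸ hv w).trans (hanti (hone_le _ hv0))
    · exact hdw.ge.trans (hanti (hone_le _ h))

lemma SimpleGraph.degree_eq_sum_adjMatrix {V R : Type*} [Fintype V] [DecidableEq V]
    [NonAssocSemiring R] (G : SimpleGraph V) [DecidableRel G.Adj] (i : V) :
    (G.degree i : R) = ∑ j, G.adjMatrix R i j := by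
  simpa [mulVec, dotProduct] using (G.adjMatrix_mulVec_const_apply (a := (1 : R)) (v := i)).symm

lemma sLapMatrix_mulVec_apply {m : ℕ} (G : SimpleGraph (Fin m)) [DecidableRel G.Adj]
    (x : Fin m → ℝ) (i : Fin m) :
    (sLapMatrix G *ᵥ x) i = ∑ j, G.adjMatrix ℝ i j * (x i + x j) := by
  rw [sLapMatrix, add_mulVec, Pi.add_apply, SimpleGraph.degMatrix_mulVec_apply,
    G.degree_eq_sum_adjMatrix, sum_mul]
  simp only [mulVec, dotProduct, mul_add, sum_add_distrib]

namespace GGraph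

-- Vertex `i` lies in cell `0, 1, 2, 3, 4` according as it is `u`, `v`, or in `P`, `R`, `S`;
-- `cellAdjMatrix` is the adjacency matrix of the quotient graph on the cells.
def cell (p r : ℕ) (i : ℕ) : Fin 5 :=
  if i = 0 then 0 else if i = 1 then 1 else if i < p + 2 then 2 else if i < p + r + 2 then 3
  else 4

def cellAdjMatrix : Matrix (Fin 5) (Fin 5) ℝ :=
  !![0, 1, 1, 1, 0; 1, 0, 1, 0, 1; 1, 1, 0, 0, 0; 1, 0, 0, 0, 0; 0, 1, 0, 0, 0]

variable {p r s : ℕ}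

lemma cell_cases (i : ℕ) :
    (i = 0 ∧ cell p r i = 0) ∨ (i = 1 ∧ cell p r i = 1) ∨ (2 ≤ i ∧ i < p + 2 ∧ cell p r i = 2) ∨
      (p + 2 ≤ i ∧ i < p + r + 2 ∧ cell p r i = 3) ∨ (p + r + 2 ≤ i ∧ cell p r i = 4) := by
  unfold cell
  split_ifs <;>
    simp only [Fin.reduceEq, zero_ne_one, one_ne_zero, and_true, and_false, or_false, false_or,
      or_self] <;>
    omega

lemma adj_iff (i j : Fin (p + r + s + 2)) :
    (GGraph p r s).Adj i j ↔
    (((i.val = 0 ∧ j.val = 1) ∨ (j.val = 0 ∧ i.val = 1)) ∨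
     (((i.val = 0 ∧ 2 ≤ j.val ∧ j.val < p + r + 2) ∨
       (i.val = 1 ∧ 2 ≤ j.val ∧ (j.val < p + 2 ∨ p + r + 2 ≤ j.val))) ∨
      ((j.val = 0 ∧ 2 ≤ i.val ∧ i.val < p + r + 2) ∨
       (j.val = 1 ∧ 2 ≤ i.val ∧ (i.val < p + 2 ∨ p + r + 2 ≤ i.val))))) := Iff.rfl

lemma adjMatrix_apply (i j : Fin (p + r + s + 2)) :
    (GGraph p r s).adjMatrix ℝ i j = cellAdjMatrix (cell p r i) (cell p r j) := by
  rw [SimpleGraph.adjMatrix_apply]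
  rcases cell_cases (p := p) (r := r) i with
    ⟨hi, hc⟩ | ⟨hi, hc⟩ | ⟨hi, hi', hc⟩ | ⟨hi, hi', hc⟩ | ⟨hi, hc⟩ <;>
  rcases cell_cases (p := p) (r := r) j with
    ⟨hj, hd⟩ | ⟨hj, hd⟩ | ⟨hj, hj', hd⟩ | ⟨hj, hj', hd⟩ | ⟨hj, hd⟩ <;>
  simp only [hc, hd, cellAdjMatrix, of_apply, cons_val', cons_val_zero, cons_val_one,
    cons_val_two, adj_iff] <;>
  split_ifs <;> first | rfl | (exfalso; omega)

lemma sum_cell {M : Type*} [AddCommMonoid M] (g : Fin 5 → M) :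
    ∑ i : Fin (p + r + s + 2), g (cell p r i) = g 0 + g 1 + p • g 2 + r • g 3 + s • g 4 := by
  rw [Fin.sum_univ_eq_sum_range (fun i => g (cell p r i)),
    ← sum_range_add_sum_Ico _ (show 2 ≤ p + r + s + 2 by omega),
    ← sum_Ico_consecutive _ (show 2 ≤ p + 2 by omega) (show p + 2 ≤ p + r + s + 2 by omega),
    ← sum_Ico_consecutive _ (show p + 2 ≤ p + r + 2 by omega)
      (show p + r + 2 ≤ p + r + s + 2 by omega)]
  have hconst (a b : ℕ) (k : Fin 5) (h : ∀ i ∈ Ico a b, cell p r i = k) :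
      ∑ i ∈ Ico a b, g (cell p r i) = (b - a) • g k := by
    rw [sum_congr rfl fun i hi => congrArg g (h i hi), sum_const, Nat.card_Ico]
  rw [hconst 2 (p + 2) 2, hconst (p + 2) (p + r + 2) 3, hconst (p + r + 2) (p + r + s + 2) 4,
    Nat.add_sub_cancel, show p + r + 2 - (p + 2) = r by omega,
    show p + r + s + 2 - (p + r + 2) = s by omega]
  · simp [sum_range_succ, cell, add_assoc]
  all_goals
    intro i hi
    simp only [mem_Ico] at hi
    simp only [cell]
    split_ifs <;> first | rfl | omega

def cellVec (p r s : ℕ) (f : Fin 5 → ℝ) : Fin (p + r + s + 2) → ℝ := fun i => f (cell p r i)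

lemma cellVec_dotProduct (f g : Fin 5 → ℝ) :
    cellVec p r s f ⬝ᵥ cellVec p r s g =
      f 0 * g 0 + f 1 * g 1 + p * (f 2 * g 2) + r * (f 3 * g 3) + s * (f 4 * g 4) := by
  simpa [dotProduct, cellVec] using sum_cell (p := p) (r := r) (s := s) fun k => f k * g k

lemma cellVec_dotProduct_sLapMatrix_mulVec (f g : Fin 5 → ℝ) :
    cellVec p r s f ⬝ᵥ sLapMatrix (GGraph p r s) *ᵥ cellVec p r s g =
      (f 0 + f 1) * (g 0 + g 1) + p * ((f 0 + f 2) * (g 0 + g 2) + (f 1 + f 2) * (g 1 + g 2)) +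
        r * ((f 0 + f 3) * (g 0 + g 3)) + s * ((f 1 + f 4) * (g 1 + g 4)) := by
  set row : Fin 5 → ℝ := fun k =>
    cellAdjMatrix k 0 * (g k + g 0) + cellAdjMatrix k 1 * (g k + g 1) +
      p • (cellAdjMatrix k 2 * (g k + g 2)) + r • (cellAdjMatrix k 3 * (g k + g 3)) +
      s • (cellAdjMatrix k 4 * (g k + g 4))
  have hrow (i : Fin (p + r + s + 2)) :
      (sLapMatrix (GGraph p r s) *ᵥ cellVec p r s g) i = row (cell p r i) := by
    rw [sLapMatrix_mulVec_apply]
    simp only [adjMatrix_apply, cellVec]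
    exact sum_cell fun l => cellAdjMatrix (cell p r i) l * (g (cell p r i) + g l)
  simp only [dotProduct, hrow]
  refine (sum_cell fun k => f k * row k).trans ?_
  simp only [row, cellAdjMatrix, of_apply, cons_val', cons_val_zero, cons_val_one,
    cons_val_fin_one, Matrix.cons_val, nsmul_eq_mul]
  ring

lemma degree_eq (i : Fin (p + r + s + 2)) :
    (GGraph p r s).degree i = ![p + r + 1, p + s + 1, 2, 1, 1] (cell p r i) := by
  apply Nat.cast_injective (R := ℝ)
  rw [SimpleGraph.degree_eq_sum_adjMatrix]
  simp only [adjMatrix_apply]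
  rw [sum_cell fun l => cellAdjMatrix (cell p r i) l]
  generalize cell p r i = k
  fin_cases k <;>
    simp only [Fin.zero_eta, Fin.mk_one, Fin.reduceFinMk, cellAdjMatrix, of_apply, cons_val',
      cons_val_zero, cons_val_one, cons_val_fin_one, Matrix.cons_val, nsmul_eq_mul, Nat.cast_add,
      Nat.cast_one, Nat.cast_ofNat] <;>
    ring

lemma degSeq_apply_zero_one (hp : 1 ≤ p) (hsr : s ≤ r) {d : Fin (p + r + s + 2) → ℕ}
    (hd : IsDegSeq (GGraph p r s) d) :
    d ⟨0, Nat.zero_lt_succ _⟩ = p + r + 1 ∧ d ⟨1, Nat.one_lt_succ_succ _⟩ = p + s + 1 := by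
  have hv : (GGraph p r s).degree ⟨0, Nat.zero_lt_succ _⟩ = p + r + 1 := by
    rw [degree_eq]; simp [cell]
  have hw : (GGraph p r s).degree ⟨1, Nat.one_lt_succ_succ _⟩ = p + s + 1 := by
    rw [degree_eq]; simp [cell]
  rw [← hv, ← hw]
  refine hd.apply_zero_apply_one (by omega) (by simp) (fun u => ?_) (fun u hu => ?_)
  · rw [hv, degree_eq]
    generalize cell p r u = k
    fin_cases k <;>
      simp only [Fin.zero_eta, Fin.mk_one, Fin.reduceFinMk, cons_val_zero, cons_val_one,
        Matrix.cons_val] <;>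
      omega
  · rw [hw, degree_eq]
    rcases cell_cases (p := p) (r := r) u with
      ⟨hi, hc⟩ | ⟨hi, hc⟩ | ⟨hi, hi', hc⟩ | ⟨hi, hi', hc⟩ | ⟨hi, hc⟩
    · exact absurd (Fin.ext hi) hu
    all_goals simp only [hc, Matrix.cons_val]; omega

lemma lt_eigSeq_zero (hp : 1 ≤ p) (hs : 1 ≤ s) (hr : r = s + 1 ∨ r = s + 2)
    {q : Fin (p + r + s + 2) → ℝ} (hq : IsEigSeq (sLapMatrix (GGraph p r s)) q) :
    (p + r + 2 : ℝ) + p / (p + r + s + 2) < q ⟨0, Nat.zero_lt_succ _⟩ := by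
  refine hq.lt_apply_zero _ (cellVec p r s ![2 * (p + r), p + r, 2, 2, 0]) ?_
  rw [cellVec_dotProduct, cellVec_dotProduct_sLapMatrix_mulVec]
  obtain ⟨P, rfl⟩ := Nat.exists_eq_add_of_le' hp
  obtain ⟨S, rfl⟩ := Nat.exists_eq_add_of_le' hs
  rcases hr with rfl | rfl <;>
  · simp only [Nat.cast_add, Nat.cast_one, Nat.cast_ofNat, cons_val_zero, cons_val_one,
      Matrix.cons_val]
    rw [← sub_pos]
    field_simp
    ring_nf
    positivity

lemma lt_eigSeq_one (hp : 1 ≤ p) (hs : 1 ≤ s) (hr : r = s + 1 ∨ r = s + 2)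
    {q : Fin (p + r + s + 2) → ℝ} (hq : IsEigSeq (sLapMatrix (GGraph p r s)) q) :
    (p + s + 1 : ℝ) - p / (p + r + s + 2) < q ⟨1, Nat.one_lt_succ_succ _⟩ := by
  refine hq.lt_apply_one _ (cellVec p r s ![2 * (p + r), p + r, 2, 2, 0])
    (cellVec p r s ![0, p + s, 1, 0, 1]) ?_ ?_ <;>
  simp only [cellVec_dotProduct, cellVec_dotProduct_sLapMatrix_mulVec] <;>
  · obtain ⟨P, rfl⟩ := Nat.exists_eq_add_of_le' hp
    obtain ⟨S, rfl⟩ := Nat.exists_eq_add_of_le' hs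
    rcases hr with rfl | rfl <;>
    · simp only [Nat.cast_add, Nat.cast_one, Nat.cast_ofNat, cons_val_zero, cons_val_one,
        Matrix.cons_val]
      rw [← sub_pos]
      field_simp
      ring_nf
      positivity

end GGraph

theorem GGraph_r_close_to_s_bounds {p r s : ℕ} (hp : 1 ≤ p) (hs : 1 ≤ s)
    (hr : r = s + 1 ∨ r = s + 2)
    (q : Fin (p + r + s + 2) → ℝ) (hq : IsEigSeq (sLapMatrix (GGraph p r s)) q)
    (d : Fin (p + r + s + 2) → ℕ) (hd : IsDegSeq (GGraph p r s) d) :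
    q ⟨0, by omega⟩ > (d ⟨0, by omega⟩ : ℝ) + 1 + (p : ℝ) / (p + r + s + 2 : ℕ) ∧
    q ⟨1, by omega⟩ > (d ⟨1, by omega⟩ : ℝ) - (p : ℝ) / (p + r + s + 2 : ℕ) := by
  obtain ⟨hd0, hd1⟩ := GGraph.degSeq_apply_zero_one hp (by omega) hd
  rw [hd0, hd1]
  push_cast
  exact ⟨by linarith [GGraph.lt_eigSeq_zero hp hs hr hq],
    by linarith [GGraph.lt_eigSeq_one hp hs hr hq]⟩
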